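/- arXiv:1904.06804 — 5 statements merged into one kernel-verified Lean document; each statement's English description precedes it below -/
import Mathlib

section
/- The operator T_i^{-1} := t^{-1}(1 - ((x_i - t x_{i+1})/(x_i - x_{i+1}))(1 - s_i)) is a two-sided inverse of T_i = t - ((x_i - t x_{i+1})/(x_i - x_{i+1}))(1 - s_i) on the ring of polynomials in x_1,...,x_n. -/
/-!
Here `ℚ(t)` is `RatFunc ℚ` with `t = RatFunc.X`, and the operators act on the fraction field of
the polynomial ring, where the division by `x_i - x_j` makes sense.

Write `T = t - c (1 - s)` and `T' = t⁻¹ (1 - c (1 - s))`, where `s` is an involutive ring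
automorphism fixing `t`. If `c + s c = 1 + t`, then `(1 - s) T = -(1 - s)` and
`(1 - s) T' = -(1 - s)`, so `T' T h = t⁻¹ (T h + c (1 - s) h) = h` and
`T T' h = t T' h + c (1 - s) h = h`. For `c = (x_i - t x_j) / (x_i - x_j)` one has
`c + s c = ((x_i - t x_j) - (x_j - t x_i)) / (x_i - x_j) = 1 + t`.
-/

noncomputable section

open MvPolynomial

abbrev PolyR (n : ℕ) := MvPolynomial (Fin n) (RatFunc ℚ)

abbrev FracK (n : ℕ) := FractionRing (PolyR n)

def tK (n : ℕ) : FracK n := algebraMap (PolyR n) (FracK n) (C RatFunc.X)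

def XK (n : ℕ) (i : Fin n) : FracK n := algebraMap (PolyR n) (FracK n) (X i)

def sOp (n : ℕ) (i j : Fin n) : FracK n ≃+* FracK n :=
  IsFractionRing.ringEquivOfRingEquiv
    ((renameEquiv (RatFunc ℚ) (Equiv.swap i j)).toRingEquiv)

def TOp (n : ℕ) (i j : Fin n) (h : FracK n) : FracK n :=
  tK n * h - (XK n i - tK n * XK n j) / (XK n i - XK n j) * (h - sOp n i j h)

def TinvOp (n : ℕ) (i j : Fin n) (h : FracK n) : FracK n :=
  (tK n)⁻¹ * (h - (XK n i - tK n * XK n j) / (XK n i - XK n j) * (h - sOp n i j h))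

lemma sOp_symm (n : ℕ) (i j : Fin n) : (sOp n i j).symm = sOp n i j := by
  rw [sOp, IsFractionRing.ringEquivOfRingEquiv_symm]
  congr 1

lemma sOp_involutive (n : ℕ) (i j : Fin n) : Function.Involutive (sOp n i j) := fun x => by
  conv_lhs => arg 2; rw [← sOp_symm]
  exact RingEquiv.apply_symm_apply _ x

lemma sOp_algebraMap (n : ℕ) (i j : Fin n) (p : PolyR n) :
    sOp n i j (algebraMap (PolyR n) (FracK n) p)
      = algebraMap (PolyR n) (FracK n) (rename (Equiv.swap i j) p) :=
  IsFractionRing.ringEquivOfRingEquiv_algebraMap _ p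

lemma sOp_tK (n : ℕ) (i j : Fin n) : sOp n i j (tK n) = tK n := by
  simp [tK, sOp_algebraMap]

lemma sOp_XK_left (n : ℕ) (i j : Fin n) : sOp n i j (XK n i) = XK n j := by
  simp [XK, sOp_algebraMap]

lemma sOp_XK_right (n : ℕ) (i j : Fin n) : sOp n i j (XK n j) = XK n i := by
  simp [XK, sOp_algebraMap]

lemma tK_ne_zero (n : ℕ) : tK n ≠ 0 := by
  simp [tK, RatFunc.X_ne_zero]

lemma XK_sub_XK_ne_zero (n : ℕ) {i j : Fin n} (hij : i ≠ j) : XK n i - XK n j ≠ 0 := by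
  simpa [XK, ← map_sub, sub_eq_zero] using hij

section Hecke

variable {K : Type*} [Field K] (σ : K →+* K) (t c : K)

def heckeOp (h : K) : K := t * h - c * (h - σ h)

def heckeInvOp (h : K) : K := t⁻¹ * (h - c * (h - σ h))

variable {σ t c}
variable (hσ : Function.Involutive σ) (hσt : σ t = t) (hc : c + σ c = 1 + t)
include hσ hσt hc

-- The left side is `(t - (c + σ c)) (h - σ h)`.
lemma heckeOp_sub_map (h : K) :
    heckeOp σ t c h - σ (heckeOp σ t c h) = -(h - σ h) := by
  simp only [heckeOp, map_sub, map_mul, hσ h, hσt]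
  linear_combination (σ h - h) * hc

lemma heckeInvOp_sub_map (ht : t ≠ 0) (h : K) :
    heckeInvOp σ t c h - σ (heckeInvOp σ t c h) = -(h - σ h) := by
  simp only [heckeInvOp, map_sub, map_mul, map_inv₀, hσ h, hσt]
  field_simp
  linear_combination (σ h - h) * hc

lemma heckeInvOp_heckeOp (ht : t ≠ 0) (h : K) : heckeInvOp σ t c (heckeOp σ t c h) = h := by
  rw [heckeInvOp, heckeOp_sub_map hσ hσt hc, heckeOp]
  field_simp
  ring

lemma heckeOp_heckeInvOp (ht : t ≠ 0) (h : K) : heckeOp σ t c (heckeInvOp σ t c h) = h := by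
  rw [heckeOp, heckeInvOp_sub_map hσ hσt hc ht, heckeInvOp]
  field_simp
  ring

end Hecke

lemma heckeCoeff_add_sOp (n : ℕ) {i j : Fin n} (hij : i ≠ j) :
    (XK n i - tK n * XK n j) / (XK n i - XK n j)
      + sOp n i j ((XK n i - tK n * XK n j) / (XK n i - XK n j)) = 1 + tK n := by
  have hsub := XK_sub_XK_ne_zero n hij
  have hsub' : XK n j - XK n i ≠ 0 := XK_sub_XK_ne_zero n hij.symm
  simp only [map_div₀, map_sub, map_mul, sOp_tK, sOp_XK_left, sOp_XK_right]
  field_simp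
  ring

/-- `T_i⁻¹` is a two-sided inverse of `T_i` on the ring of polynomials. -/
theorem hecke_inverse (n : ℕ) (i j : Fin n) (hij : (i : ℕ) + 1 = (j : ℕ))
    (h : PolyR n) :
    TinvOp n i j (TOp n i j (algebraMap (PolyR n) (FracK n) h))
        = algebraMap (PolyR n) (FracK n) h ∧
    TOp n i j (TinvOp n i j (algebraMap (PolyR n) (FracK n) h))
        = algebraMap (PolyR n) (FracK n) h := by
  have hne : i ≠ j := fun he => by simp [he] at hij
  have hσ := sOp_involutive n i j
  have hc := heckeCoeff_add_sOp n hne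
  -- `TOp` and `TinvOp` unfold to `heckeOp` and `heckeInvOp` for `σ = sOp n i j`.
  exact ⟨heckeInvOp_heckeOp (σ := (sOp n i j : FracK n →+* FracK n)) hσ (sOp_tK n i j) hc
      (tK_ne_zero n) _,
    heckeOp_heckeInvOp (σ := (sOp n i j : FracK n →+* FracK n)) hσ (sOp_tK n i j) hc
      (tK_ne_zero n) _⟩
end
end

section
/- The polynomial representation of the Hecke generators satisfies the braid relation: T_i T_{i+1} T_i = T_{i+1} T_i T_{i+1} as operators on ℂ[x_1,...,x_n], for 1 ≤ i ≤ n-2. -/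
/-!
A permutation `σ` of the variables, which fixes `t`, carries the defining expression of
`T_{ab} f` to that of `T_{σa,σb} (σ f)`. Pushing the transpositions through, both sides of the
braid relation become rational expressions in `t`, `x_i, x_{i+1}, x_{i+2}` and the six
`S₃`-translates of `h`; the longest element occurs on both sides because
`s_i s_{i+1} s_i = s_{i+1} s_i s_{i+1}`. What remains is an identity of rational functions,
checked by clearing denominators.
-/

noncomputable section

open MvPolynomial

open Equiv

section Field

variable {K : Type*} [Field K]

/-- `g` stands for the image of `f` under the transposition of `u` and `v`. -/
def demazureLusztigExpr (t u v f g : K) : K :=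
  t * f - (u - t * v) / (u - v) * (f - g)

theorem map_demazureLusztigExpr {L F : Type*} [Field L] [FunLike F K L] [RingHomClass F K L]
    (φ : F) (t u v f g : K) :
    φ (demazureLusztigExpr t u v f g) =
      demazureLusztigExpr (φ t) (φ u) (φ v) (φ f) (φ g) := by
  simp only [demazureLusztigExpr, map_sub, map_mul, map_div₀]

theorem demazureLusztigExpr_braid {x₁ x₂ x₃ : K} (h₁₂ : x₁ ≠ x₂) (h₂₃ : x₂ ≠ x₃)
    (h₁₃ : x₁ ≠ x₃) (t f f₁ f₂ f₁₂ f₂₁ f₁₂₁ : K) :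
    demazureLusztigExpr t x₁ x₂
        (demazureLusztigExpr t x₂ x₃ (demazureLusztigExpr t x₁ x₂ f f₁)
          (demazureLusztigExpr t x₁ x₃ f₂ f₂₁))
        (demazureLusztigExpr t x₁ x₃ (demazureLusztigExpr t x₂ x₁ f₁ f)
          (demazureLusztigExpr t x₂ x₃ f₁₂ f₁₂₁)) =
      demazureLusztigExpr t x₂ x₃
        (demazureLusztigExpr t x₁ x₂ (demazureLusztigExpr t x₂ x₃ f f₂)
          (demazureLusztigExpr t x₁ x₃ f₁ f₁₂))
        (demazureLusztigExpr t x₁ x₃ (demazureLusztigExpr t x₃ x₂ f₂ f)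
          (demazureLusztigExpr t x₁ x₂ f₂₁ f₁₂₁)) := by
  have := sub_ne_zero.2 h₁₂
  have := sub_ne_zero.2 h₂₃
  have := sub_ne_zero.2 h₁₃
  simp only [demazureLusztigExpr]
  field_simp
  ring

end Field

section PermutationAction

variable {ι K : Type*} [DecidableEq ι] [Field K]

variable (ρ : Perm ι →* RingAut K) (t : K) (x : ι → K) in
def demazureLusztig (a b : ι) (f : K) : K :=
  demazureLusztigExpr t (x a) (x b) f (ρ (swap a b) f)

variable {ρ : Perm ι →* RingAut K} {t : K} {x : ι → K}

theorem demazureLusztig_braid (ht : ∀ σ, ρ σ t = t) (hx : ∀ σ a, ρ σ (x a) = x (σ a))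
    (hinj : Function.Injective x) {a b c : ι}
    (hab : a ≠ b) (hbc : b ≠ c) (hac : a ≠ c) (f : K) :
    demazureLusztig ρ t x a b (demazureLusztig ρ t x b c (demazureLusztig ρ t x a b f)) =
      demazureLusztig ρ t x b c (demazureLusztig ρ t x a b (demazureLusztig ρ t x b c f)) := by
  have hcomp (σ τ : Perm ι) (g : K) : ρ σ (ρ τ g) = ρ (σ * τ) g := by
    rw [map_mul, RingAut.mul_apply]
  have hbraid : swap b c * (swap a b * swap b c) = swap a b * (swap b c * swap a b) := by
    rw [← mul_assoc, ← mul_assoc, swap_mul_swap_mul_swap hab hac, swap_comm a b, swap_comm b c,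
      swap_mul_swap_mul_swap hbc.symm hac.symm, swap_comm]
  simp only [demazureLusztig, map_demazureLusztigExpr, ht, hx, hcomp, swap_apply_left,
    swap_apply_right, swap_apply_of_ne_of_ne hac.symm hbc.symm, swap_apply_of_ne_of_ne hab hac,
    swap_mul_self, map_one, RingAut.one_apply, hbraid]
  exact demazureLusztigExpr_braid (hinj.ne hab) (hinj.ne hbc) (hinj.ne hac) _ _ _ _ _ _ _

end PermutationAction

def MvPolynomial.renameHom (R σ : Type*) [CommSemiring R] :
    Perm σ →* RingAut (MvPolynomial σ R) where
  toFun e := (renameEquiv R e).toRingEquiv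
  map_one' := by ext; simp
  map_mul' _ _ := by ext; simp

def permAction (n : ℕ) : Perm (Fin n) →* RingAut (FracK n) :=
  (IsFractionRing.ringEquivOfRingEquivHom (PolyR n) (FracK n)).comp
    (renameHom (RatFunc ℚ) (Fin n))

theorem permAction_algebraMap (n : ℕ) (σ : Perm (Fin n)) (p : PolyR n) :
    permAction n σ (algebraMap (PolyR n) (FracK n) p) =
      algebraMap (PolyR n) (FracK n) (rename σ p) :=
  IsFractionRing.ringEquivOfRingEquiv_algebraMap _ p

theorem permAction_tK (n : ℕ) (σ : Perm (Fin n)) : permAction n σ (tK n) = tK n := by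
  rw [tK, permAction_algebraMap, rename_C]

theorem permAction_XK (n : ℕ) (σ : Perm (Fin n)) (a : Fin n) :
    permAction n σ (XK n a) = XK n (σ a) := by
  rw [XK, permAction_algebraMap, rename_X]
  rfl

theorem XK_injective (n : ℕ) : Function.Injective (XK n) :=
  (IsFractionRing.injective (PolyR n) (FracK n)).comp (X_injective (R := RatFunc ℚ))

theorem TOp_eq_demazureLusztig (n : ℕ) (i j : Fin n) :
    TOp n i j = demazureLusztig (permAction n) (tK n) (XK n) i j :=
  rfl

/-- the braid relation `T_i T_{i+1} T_i = T_{i+1} T_i T_{i+1}`,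
where `T_i` involves the adjacent variables `x_i, x_{i+1}` (here `j = i+1`) and
`T_{i+1}` involves `x_{i+1}, x_{i+2}` (here `k = j+1`). -/
theorem hecke_braid_relation (n : ℕ) (i j k : Fin n)
    (hij : (i : ℕ) + 1 = (j : ℕ)) (hjk : (j : ℕ) + 1 = (k : ℕ))
    (h : PolyR n) :
    TOp n i j (TOp n j k (TOp n i j (algebraMap (PolyR n) (FracK n) h)))
      = TOp n j k (TOp n i j (TOp n j k (algebraMap (PolyR n) (FracK n) h))) := by
  simp only [TOp_eq_demazureLusztig]
  exact demazureLusztig_braid (permAction_tK n) (permAction_XK n) (XK_injective n)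
    (Fin.ne_of_val_ne (by omega)) (Fin.ne_of_val_ne (by omega)) (Fin.ne_of_val_ne (by omega)) _
end
end

section
/- For a composition μ ∈ ℕ^n, 1 ≤ i ≤ n and 0 ≤ j ≤ μ_i - 1, the integer identity #{ℓ < i : j < μ_ℓ} + γ_{i,j}(μ) = α_{i,j}(μ) holds, where γ_{i,j}(μ) = -#{k < i : μ_k > μ_i} + #{k > i : j ≤ μ_k < μ_i} and α_{i,j}(μ) = #{k < i : μ_k = μ_i} + #{k ≠ i : j < μ_k < μ_i} + #{k > i : j = μ_k}. -/
/-!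
STATEMENT 7: For a composition `μ ∈ ℕ^n`, `1 ≤ i ≤ n` and `0 ≤ j ≤ μ_i - 1`
(i.e. `j < μ_i`), the integer identity
`#{ℓ < i : j < μ_ℓ} + γ_{i,j}(μ) = α_{i,j}(μ)` holds, where
`γ_{i,j}(μ) = -#{k < i : μ_k > μ_i} + #{k > i : j ≤ μ_k < μ_i}` and
`α_{i,j}(μ) = #{k < i : μ_k = μ_i} + #{k ≠ i : j < μ_k < μ_i} + #{k > i : j = μ_k}`.
-/

open Finset

/-- `γ_{i,j}(μ)` -/
def gammaC {n : ℕ} (μ : Fin n → ℕ) (i : Fin n) (j : ℕ) : ℤ :=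
  -((univ.filter fun k => k < i ∧ μ i < μ k).card : ℤ)
    + ((univ.filter fun k => i < k ∧ j ≤ μ k ∧ μ k < μ i).card : ℤ)

/-- `α_{i,j}(μ)` -/
def alphaC {n : ℕ} (μ : Fin n → ℕ) (i : Fin n) (j : ℕ) : ℕ :=
  (univ.filter fun k => k < i ∧ μ k = μ i).card
    + (univ.filter fun k => k ≠ i ∧ j < μ k ∧ μ k < μ i).card
    + (univ.filter fun k => i < k ∧ j = μ k).card

/-- `#{ℓ < i : j < μ_ℓ} + γ_{i,j}(μ) = α_{i,j}(μ)` for `j < μ_i`. -/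
theorem gamma_alpha_identity (n : ℕ) (μ : Fin n → ℕ) (i : Fin n) (j : ℕ)
    (hj : j < μ i) :
    ((univ.filter fun l => l < i ∧ j < μ l).card : ℤ) + gammaC μ i j
      = (alphaC μ i j : ℤ) := by
  have key : ∀ (p : Fin n → Prop) (_ : DecidablePred p),
      ((univ.filter p).card : ℤ) = ∑ k, if p k then (1 : ℤ) else 0 := by
    intro p hp
    rw [Finset.card_filter]
    push_cast
    rfl
  simp only [gammaC, alphaC]
  push_cast
  rw [key _ _, key _ _, key _ _, key _ _, key _ _, key _ _,
    ← Finset.sum_neg_distrib, ← Finset.sum_add_distrib, ← Finset.sum_add_distrib,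
    ← Finset.sum_add_distrib, ← Finset.sum_add_distrib]
  refine Finset.sum_congr rfl fun k _ => ?_
  rcases lt_trichotomy k i with h | h | h
  · simp only [h, not_lt_of_gt h, ne_eq, h.ne, true_and, false_and, and_false,
      if_false, not_false_iff]
    split_ifs <;> omega
  · subst h
    simp
  · simp only [h, not_lt_of_gt h, ne_eq, h.ne', true_and, false_and, and_false,
      if_false, not_false_iff]
    split_ifs <;> omega
end

section
/- With notation as above, the ratio of the 'g-statistic plus position of v-exponents' before and after rotation is computed by: g(p) − g̃(p) = #{ℓ ∈ Q : ℓ < p, b_ℓ = n} − 𝟙(a_p = n)·#{ℓ ∈ Q : ℓ < p} for p ∈ P; and 𝟙(a_p > b_p) − 𝟙(ã_p > b̃_p) = 𝟙(a_p = n) − 𝟙(b_p = n) for p ∈ Q with a_p ≠ b_p. -/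
/-!
Rotation `x ↦ x + 1` on `Fin (n + 1)` preserves the relative order of two distinct
points unless one of them is the top element `Fin.last n`, which wraps around to `0`.
So the indicator `𝟙(x < y)` drops by one exactly when `y` is the top, and rises by one
exactly when `x` is; summing this over `ℓ ∈ Q` with `ℓ < p` (where `a_p ≠ b_ℓ`) gives `g − g̃`.
-/

open Finset

namespace Fin

theorem ite_lt_sub_ite_add_one_lt {n : ℕ} {x y : Fin (n + 1)} (h : x ≠ y) :
    (if x < y then (1 : ℤ) else 0) - (if x + 1 < y + 1 then (1 : ℤ) else 0)
      = (if y = last n then (1 : ℤ) else 0) - (if x = last n then (1 : ℤ) else 0) := by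
  have hx := val_add_one x
  have hy := val_add_one y
  have hne : x.val ≠ y.val := val_ne_of_ne h
  have hxle : x.val ≤ n := is_le x
  have hyle : y.val ≤ n := is_le y
  simp only [lt_def, Fin.ext_iff, val_last] at *
  split_ifs at * <;> omega

theorem card_filter_lt_sub_card_filter_add_one_lt {ι : Type*} {n : ℕ} (s : Finset ι)
    (x : Fin (n + 1)) (b : ι → Fin (n + 1)) (hs : ∀ l ∈ s, x ≠ b l) :
    (#(s.filter fun l => x < b l) : ℤ) - #(s.filter fun l => x + 1 < b l + 1)
      = #(s.filter fun l => b l = last n) - (if x = last n then 1 else 0) * #s := by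
  simp only [natCast_card_filter, ← sum_sub_distrib]
  rw [sum_congr rfl fun l hl => ite_lt_sub_ite_add_one_lt (hs l hl), sum_sub_distrib,
    Finset.sum_const, nsmul_eq_mul, mul_comm]

end Fin

theorem rotation_g_and_indicator_general (n : ℕ) (P Q : Finset (Fin (n + 1)))
    (a b : Fin (n + 1) → Fin (n + 1))
    (hab : ∀ p ∈ P ∪ Q, ∀ l ∈ Q, l < p → a p ≠ b l) :
    (∀ p ∈ P,
      ((Q.filter fun l => l < p ∧ a p < b l).card : ℤ)
          - ((Q.filter fun l => l < p ∧ a p + 1 < b l + 1).card : ℤ)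
        = ((Q.filter fun l => l < p ∧ b l = Fin.last n).card : ℤ)
          - (if a p = Fin.last n then 1 else 0) * ((Q.filter fun l => l < p).card : ℤ)) ∧
    (∀ p ∈ Q, a p ≠ b p →
      (if b p < a p then (1 : ℤ) else 0) - (if b p + 1 < a p + 1 then (1 : ℤ) else 0)
        = (if a p = Fin.last n then (1 : ℤ) else 0)
          - (if b p = Fin.last n then (1 : ℤ) else 0)) := by
  refine ⟨fun p hp => ?_, fun p _ hne => Fin.ite_lt_sub_ite_add_one_lt hne.symm⟩
  simp only [← filter_filter]
  refine Fin.card_filter_lt_sub_card_filter_add_one_lt _ _ _ fun l hl => ?_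
  obtain ⟨hlQ, hlp⟩ := mem_filter.mp hl
  exact hab p (mem_union_left Q hp) l hlQ hlp

/-- effect of the cyclic rotation on `g` and on the `v`-exponent
indicators. -/
theorem rotation_g_and_indicator (n : ℕ) (P Q : Finset (Fin (n + 1)))
    (hPQ : Disjoint P Q) (a b : Fin (n + 1) → Fin (n + 1))
    (ha : Set.InjOn a ↑(P ∪ Q)) (hb : Set.InjOn b ↑Q)
    (hab : ∀ p ∈ P ∪ Q, ∀ l ∈ Q, l < p → a p ≠ b l) :
    (∀ p ∈ P,
      ((Q.filter fun l => l < p ∧ a p < b l).card : ℤ)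
          - ((Q.filter fun l => l < p ∧ a p + 1 < b l + 1).card : ℤ)
        = ((Q.filter fun l => l < p ∧ b l = Fin.last n).card : ℤ)
          - (if a p = Fin.last n then 1 else 0) * ((Q.filter fun l => l < p).card : ℤ)) ∧
    (∀ p ∈ Q, a p ≠ b p →
      (if b p < a p then (1 : ℤ) else 0) - (if b p + 1 < a p + 1 then (1 : ℤ) else 0)
        = (if a p = Fin.last n then (1 : ℤ) else 0)
          - (if b p = Fin.last n then (1 : ℤ) else 0)) :=
  rotation_g_and_indicator_general n P Q a b hab
end

section
/- Let μ ∈ ℕ^n be a composition and σ a filling of the extended diagram of μ (assigning σ_{i,j} ∈ {1,...,n} to each square (i,j) with 1 ≤ i ≤ n, 0 ≤ j ≤ μ_i, and σ_{i,0} = i). The map sending a μ-legal lattice configuration ξ = {k_i^{(j)}} (satisfying: for each colour a and 0 ≤ j ≤ μ_a there is a unique i with k_i^{(j)} = a, and no such i for j > μ_a; k_i^{(0)} = i; and no i,j with n ≥ k_i^{(j)} > k_i^{(j+1)} ≥ 1) to the filling σ defined by σ_{a,j} = the unique i with k_i^{(j)} = a, is a bijection onto the set of non-attacking fillings of μ (those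 with σ_{i,j} ≠ σ_{i',j} for i < i' with both defined, and σ_{i,j+1} ≠ σ_{i',j} for i < i'). -/
/-!
A configuration is a function `ξ : Fin n → ℕ → Option (Fin n)`, where
`ξ i j = some a` means that the vertical edge in row `i` and column `j` carries
the colour `a`, and `ξ i j = none` means it carries the colour `0`.
A filling `σ` is encoded the same way, `σ i j = some r` meaning that square
`(i,j)` of the extended diagram is filled by `r`.

In both encodings every column `j` is a partial injection (for a configuration by
the uniqueness in `μ`-legality, for a filling by the first non-attacking condition),
and the bijection inverts each column. Under this inversion the domain condition
`j ≤ μ a` and the basement match the colour-count and boundary conditions, and the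
row condition `a ≤ b` of a configuration is exactly the second non-attacking condition.
-/

/-- `σ` is a filling of the extended diagram of `μ` -/
def IsFilling {n : ℕ} (μ : Fin n → ℕ) (σ : Fin n → ℕ → Option (Fin n)) : Prop :=
  (∀ i j, (σ i j).isSome ↔ j ≤ μ i) ∧ (∀ i, σ i 0 = some i)

/-- `σ` is a non-attacking filling of the extended diagram of `μ` -/
def NonAttacking {n : ℕ} (μ : Fin n → ℕ) (σ : Fin n → ℕ → Option (Fin n)) : Prop :=
  IsFilling μ σ ∧
  (∀ i i' j, i < i' → (σ i j).isSome → (σ i' j).isSome → σ i j ≠ σ i' j) ∧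
  (∀ i i' j, i < i' → (σ i (j + 1)).isSome → (σ i' j).isSome → σ i (j + 1) ≠ σ i' j)

/-- `ξ` is a `μ`-legal lattice configuration -/
def Legal {n : ℕ} (μ : Fin n → ℕ) (ξ : Fin n → ℕ → Option (Fin n)) : Prop :=
  (∀ a : Fin n, ∀ j, j ≤ μ a → ∃! i, ξ i j = some a) ∧
  (∀ a : Fin n, ∀ j, μ a < j → ∀ i, ξ i j ≠ some a) ∧
  (∀ i, ξ i 0 = some i) ∧
  (∀ i j (a b : Fin n), ξ i j = some a → ξ i (j + 1) = some b → a ≤ b)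

open Classical in
noncomputable def columnInverse {ι β κ : Type*} (f : ι → β → Option κ) : κ → β → Option ι :=
  fun a j => if h : ∃ r, f r j = some a then some h.choose else none

def ColumnInjective {ι β κ : Type*} (f : ι → β → Option κ) : Prop :=
  ∀ j a r r', f r j = some a → f r' j = some a → r = r'

section ColumnInverse

variable {ι β κ : Type*} {f : ι → β → Option κ}

theorem eq_some_of_columnInverse_eq_some {a : κ} {j : β} {r : ι}
    (h : columnInverse f a j = some r) : f r j = some a := by
  unfold columnInverse at h
  split_ifs at h with hex
  exact Option.some.inj h ▸ hex.choose_spec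

theorem ColumnInjective.columnInverse_eq_some_iff (hf : ColumnInjective f) {a : κ} {j : β}
    {r : ι} : columnInverse f a j = some r ↔ f r j = some a := by
  refine ⟨eq_some_of_columnInverse_eq_some, fun h => ?_⟩
  have hex : ∃ r, f r j = some a := ⟨r, h⟩
  rw [columnInverse, dif_pos hex, hf j a _ _ hex.choose_spec h]

theorem columnInjective_columnInverse (f : ι → β → Option κ) :
    ColumnInjective (columnInverse f) := fun _ _ _ _ h h' =>
  Option.some.inj ((eq_some_of_columnInverse_eq_some h).symm.trans
    (eq_some_of_columnInverse_eq_some h'))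

theorem ColumnInjective.columnInverse_columnInverse (hf : ColumnInjective f) :
    columnInverse (columnInverse f) = f := by
  funext r j
  refine Option.ext fun a => ?_
  rw [(columnInjective_columnInverse f).columnInverse_eq_some_iff, hf.columnInverse_eq_some_iff]

end ColumnInverse

section

variable {n : ℕ} {μ : Fin n → ℕ}

theorem Legal.columnInjective {ξ : Fin n → ℕ → Option (Fin n)} (hξ : Legal μ ξ) :
    ColumnInjective ξ := by
  intro j a r r' h h'
  rcases le_or_gt j (μ a) with hj | hj
  · exact (hξ.1 a j hj).unique h h'
  · exact absurd h (hξ.2.1 a j hj r)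

theorem NonAttacking.columnInjective {σ : Fin n → ℕ → Option (Fin n)}
    (hσ : NonAttacking μ σ) : ColumnInjective σ := by
  intro j r a a' h h'
  by_contra hne
  rcases lt_or_gt_of_ne hne with hlt | hlt
  · exact hσ.2.1 a a' j hlt (by simp [h]) (by simp [h']) (h.trans h'.symm)
  · exact hσ.2.1 a' a j hlt (by simp [h']) (by simp [h]) (h'.trans h.symm)

theorem Legal.nonAttacking_columnInverse {ξ : Fin n → ℕ → Option (Fin n)} (hξ : Legal μ ξ) :
    NonAttacking μ (columnInverse ξ) := by
  have hinv {a j r} : columnInverse ξ a j = some r ↔ ξ r j = some a :=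
    hξ.columnInjective.columnInverse_eq_some_iff
  refine ⟨⟨fun a j => ?_, fun a => hinv.2 (hξ.2.2.1 a)⟩, fun a a' j hlt h _ heq => ?_,
    fun a a' j hlt h _ heq => ?_⟩
  · rw [Option.isSome_iff_exists]
    constructor
    · rintro ⟨r, hr⟩
      exact le_of_not_gt fun hj => hξ.2.1 a j hj r (hinv.1 hr)
    · intro hj
      obtain ⟨r, hr, -⟩ := hξ.1 a j hj
      exact ⟨r, hinv.2 hr⟩
  · obtain ⟨r, hr⟩ := Option.isSome_iff_exists.1 h
    exact hlt.ne (Option.some.inj ((hinv.1 hr).symm.trans (hinv.1 (heq ▸ hr))))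
  · obtain ⟨r, hr⟩ := Option.isSome_iff_exists.1 h
    exact (hξ.2.2.2 r j a' a (hinv.1 (heq ▸ hr)) (hinv.1 hr)).not_gt hlt

theorem NonAttacking.legal_columnInverse {σ : Fin n → ℕ → Option (Fin n)}
    (hσ : NonAttacking μ σ) : Legal μ (columnInverse σ) := by
  have hinv {r j a} : columnInverse σ r j = some a ↔ σ a j = some r :=
    hσ.columnInjective.columnInverse_eq_some_iff
  refine ⟨fun a j hj => ?_, fun a j hj r hr => ?_, fun i => hinv.2 (hσ.1.2 i),
    fun r j a b ha hb => ?_⟩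
  · obtain ⟨r, hr⟩ := Option.isSome_iff_exists.1 ((hσ.1.1 a j).2 hj)
    exact ⟨r, hinv.2 hr, fun r' hr' => Option.some.inj ((hinv.1 hr').symm.trans hr)⟩
  · exact hj.not_ge ((hσ.1.1 a j).1 (by simp [hinv.1 hr]))
  · refine le_of_not_gt fun hba => ?_
    exact hσ.2.2 b a j hba (by simp [hinv.1 hb]) (by simp [hinv.1 ha])
      ((hinv.1 hb).trans (hinv.1 ha).symm)

end

/-- there is a map `F` from configurations to fillings such that,
on `μ`-legal configurations, `F ξ` is characterized by
`(F ξ) a j = some r ↔ ξ r j = some a` (i.e. `σ_{a,j}` is the unique row `r`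
with `k_r^{(j)} = a`), and `F` is a bijection from the set of `μ`-legal
configurations onto the set of non-attacking fillings of `μ`. -/
theorem config_filling_bijection (n : ℕ) (μ : Fin n → ℕ) :
    ∃ F : (Fin n → ℕ → Option (Fin n)) → (Fin n → ℕ → Option (Fin n)),
      (∀ ξ, Legal μ ξ → ∀ (a : Fin n) (j : ℕ) (r : Fin n),
        F ξ a j = some r ↔ ξ r j = some a) ∧
      Set.BijOn F {ξ | Legal μ ξ} {σ | NonAttacking μ σ} := by
  refine ⟨columnInverse, fun ξ hξ _ _ _ => hξ.columnInjective.columnInverse_eq_some_iff, ?_⟩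
  refine Set.InvOn.bijOn (f' := columnInverse)
    ⟨fun _ hξ => hξ.columnInjective.columnInverse_columnInverse,
      fun _ hσ => hσ.columnInjective.columnInverse_columnInverse⟩
    (fun _ => Legal.nonAttacking_columnInverse) (fun _ => NonAttacking.legal_columnInverse)
end
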